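/- With $I_0(q) = \sum_{d\geq0} \frac{(3d)!}{(d!)^3} q^d$, $L = (1-27q)^{-1/3}$, $X_1 = L^{-1} q\frac{d}{dq}\ln(I_0/L)$, $X_2 = (L^{-1}q\frac{d}{dq})^2 \ln(I_0/L)$, and $Y_2 = (L^{-1}q\frac{d}{dq})^2 \ln(q^{1/3} L)$, the relation $X_2 = -X_1^2 - \frac{1}{2} Y_2$ holds. -/

import Mathlib

open PowerSeries

/-- The logarithmic derivative operator `D = q d/dq` on formal power series. -/
noncomputable def logD (f : PowerSeries ℚ) : PowerSeries ℚ :=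
  PowerSeries.X * PowerSeries.derivative ℚ f

/-- `I₀(q) = ∑_{d≥0} (3d)!/(d!)³ qᵈ`. -/
noncomputable def I0 : PowerSeries ℚ :=
  PowerSeries.mk fun d => ((3 * d).factorial : ℚ) / ((d.factorial : ℚ)) ^ 3

/-!
Write `θ = q d/dq`, `u = θI₀/I₀` and `v = θL/L`. Differentiating `L³(1 - 27q) = 1` gives
`3v + 1 = L³` and `θv = L³v`, while the Picard–Fuchs equation of `I₀` becomes the Riccati
equation `θu = (L³ - 1)(u + 2/9) - u²`. Since `θ(L⁻¹w) = L⁻¹(θw - vw)`, both sides of the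
relation are `L⁻²` times a polynomial in `u` and `v`, and these polynomials agree.
-/

namespace Derivation

variable {R A : Type*} [CommRing R] [CommRing A] [Algebra R A] (D : Derivation R A A)

theorem apply_ofNat_mul (n : ℕ) [n.AtLeastTwo] (a : A) :
    D (OfNat.ofNat n * a) = OfNat.ofNat n * D a := by
  rw [leibniz, ← Nat.cast_ofNat, D.map_natCast]
  simp

theorem mul_apply_pow (f : A) (n : ℕ) : f * D (f ^ n) = n * f ^ n * D f := by
  cases n with
  | zero => simp
  | succ n => rw [leibniz_pow, nsmul_eq_mul, smul_eq_mul]; push_cast; ring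

theorem apply_mul_of_mul_eq_one {f g : A} (h : f * g = 1) :
    D (D f * g) = D (D f) * g - (D f * g) ^ 2 := by
  have hg : D g = -(g ^ 2 * D f) := by
    simpa using D.leibniz_of_mul_eq_one (mul_comm f g ▸ h)
  rw [leibniz, hg, smul_eq_mul, smul_eq_mul]
  ring

-- `L = (1 - p)^(-1/n)` with `D p = p`, and `L'` its inverse.
variable {p L L' : A} {n : ℕ}

theorem natCast_mul_apply_mul_add_one_of_pow_mul_one_sub_eq_one (hp : D p = p)
    (h : L ^ n * (1 - p) = 1) (hL : L * L' = 1) : n * (D L * L') + 1 = L ^ n := by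
  have hD := congrArg D h
  rw [leibniz, D.map_one_eq_zero, map_sub, D.map_one_eq_zero, hp, smul_eq_mul,
    smul_eq_mul] at hD
  linear_combination L' * (-(n * D L) - L) * h + L * L' * hD
    - (1 - p) * L' * D.mul_apply_pow L n + (L ^ n - 1) * hL

theorem natCast_mul_apply_apply_mul_of_pow_mul_one_sub_eq_one (hp : D p = p)
    (h : L ^ n * (1 - p) = 1) (hL : L * L' = 1) :
    n * D (D L * L') = n * (L ^ n * (D L * L')) := by
  have hD := congrArg D (D.natCast_mul_apply_mul_add_one_of_pow_mul_one_sub_eq_one hp h hL)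
  rw [map_add, D.map_one_eq_zero, leibniz, D.map_natCast, smul_eq_mul, smul_eq_mul] at hD
  linear_combination L * L' * hD + L' * D.mul_apply_pow L n - n * D (D L * L') * hL

end Derivation

noncomputable def logDerivation : Derivation ℚ ℚ⟦X⟧ ℚ⟦X⟧ :=
  (X : ℚ⟦X⟧) • derivative ℚ

theorem logDerivation_apply (f : ℚ⟦X⟧) : logDerivation f = logD f := rfl

theorem logD_C (r : ℚ) : logD (C r) = 0 := by simp [logD]

theorem logDerivation_ofNat_mul_X (n : ℕ) [n.AtLeastTwo] :
    logDerivation (OfNat.ofNat n * X) = OfNat.ofNat n * X := by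
  rw [logDerivation.apply_ofNat_mul, logDerivation_apply]
  simp [logD]

theorem three_mul_logD_mul_inv_add_one {L : ℚ⟦X⟧} (hL : L ^ 3 * (1 - 27 * X) = 1)
    (hLL : L * L⁻¹ = 1) : 3 * (logD L * L⁻¹) + 1 = L ^ 3 := by
  exact_mod_cast logDerivation.natCast_mul_apply_mul_add_one_of_pow_mul_one_sub_eq_one
    (logDerivation_ofNat_mul_X 27) hL hLL

theorem logD_logD_mul_inv {L : ℚ⟦X⟧} (hL : L ^ 3 * (1 - 27 * X) = 1) (hLL : L * L⁻¹ = 1) :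
    logD (logD L * L⁻¹) = L ^ 3 * (logD L * L⁻¹) := by
  have h3 : (3 : ℚ⟦X⟧) ≠ 0 := by
    rw [← map_ofNat C 3, Ne, map_eq_zero_iff _ C_injective]
    norm_num
  have h := logDerivation.natCast_mul_apply_apply_mul_of_pow_mul_one_sub_eq_one
    (logDerivation_ofNat_mul_X 27) hL hLL
  simp only [logDerivation_apply, Nat.cast_ofNat] at h
  exact mul_left_cancel₀ h3 h

theorem coeff_logD (f : ℚ⟦X⟧) (n : ℕ) : coeff n (logD f) = n * coeff n f := by
  cases n with
  | zero => simp [logD]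
  | succ n => rw [logD, coeff_succ_X_mul, coeff_derivative]; push_cast; ring

theorem constantCoeff_I0 : constantCoeff I0 = 1 := by simp [I0]

theorem coeff_succ_I0 (n : ℕ) :
    ((n : ℚ) + 1) ^ 2 * coeff (n + 1) I0 = 3 * (3 * n + 1) * (3 * n + 2) * coeff n I0 := by
  have h3 : 3 * (n + 1) = (3 * n + 2) + 1 := by ring
  simp only [I0, coeff_mk, h3, Nat.factorial_succ]
  push_cast
  field_simp
  ring

theorem one_sub_mul_logD_logD_I0 :
    (1 - 27 * X) * logD (logD I0) = 27 * X * logD I0 + 6 * X * I0 := by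
  ext (_ | n)
  · simp [logD]
  · simp only [sub_mul, one_mul, map_sub, map_add, ← map_ofNat C, mul_assoc, coeff_C_mul,
      coeff_succ_X_mul, coeff_logD]
    push_cast
    linear_combination coeff_succ_I0 n

theorem logD_logD_I0_mul_inv {L : ℚ⟦X⟧} (hL : L ^ 3 * (1 - 27 * X) = 1) :
    logD (logD I0 * I0⁻¹) =
      (L ^ 3 - 1) * (logD I0 * I0⁻¹ + C (2 / 9)) - (logD I0 * I0⁻¹) ^ 2 := by
  have hII : I0 * I0⁻¹ = 1 := PowerSeries.mul_inv_cancel I0 (by simp [constantCoeff_I0])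
  have hRiccati := logDerivation.apply_mul_of_mul_eq_one hII
  simp only [logDerivation_apply] at hRiccati
  have h27 : (27 : ℚ⟦X⟧) * C (2 / 9) = 6 := by
    simp only [← map_ofNat C, ← map_mul]
    norm_num
  linear_combination hRiccati + L ^ 3 * I0⁻¹ * one_sub_mul_logD_logD_I0
    - (logD (logD I0) * I0⁻¹ + logD I0 * I0⁻¹ + C (2 / 9)) * hL
    + 6 * X * L ^ 3 * hII - L ^ 3 * X * h27

/-- with `L = (1-27q)^{-1/3}`,
`X₁ = L⁻¹ q d/dq ln(I₀/L) = L⁻¹ (D I₀/I₀ - D L/L)`,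
`X₂ = L⁻¹ D X₁`, `Y₁ = L⁻¹ q d/dq ln(q^{1/3} L) = L⁻¹ (1/3 + D L/L)` and
`Y₂ = L⁻¹ D Y₁`, the relation `X₂ = -X₁² - (1/2) Y₂` holds. -/
theorem X2_relation (L : PowerSeries ℚ)
    (hL : L ^ 3 * (1 - 27 * PowerSeries.X) = 1)
    (hL0 : PowerSeries.constantCoeff L = 1)
    (X1 X2 Y1 Y2 : PowerSeries ℚ)
    (hX1 : X1 = L⁻¹ * (logD I0 * I0⁻¹ - logD L * L⁻¹))
    (hX2 : X2 = L⁻¹ * logD X1)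
    (hY1 : Y1 = L⁻¹ * (PowerSeries.C (1/3 : ℚ) + logD L * L⁻¹))
    (hY2 : Y2 = L⁻¹ * logD Y1) :
    X2 = -X1 ^ 2 - PowerSeries.C (1/2 : ℚ) * Y2 := by
  subst hX1 hX2 hY1 hY2
  have hLL : L * L⁻¹ = 1 := PowerSeries.mul_inv_cancel L (by simp [hL0])
  have hv := three_mul_logD_mul_inv_add_one hL hLL
  have hDv := logD_logD_mul_inv hL hLL
  have hDu := logD_logD_I0_mul_inv hL
  have hDLinv : logD L⁻¹ = -(L⁻¹ * (logD L * L⁻¹)) := by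
    have h := logDerivation.leibniz_of_mul_eq_one (mul_comm L _ ▸ hLL)
    simp only [logDerivation_apply, smul_eq_mul] at h
    linear_combination h
  set u := logD I0 * I0⁻¹
  set v := logD L * L⁻¹
  have h2 : (2 : ℚ⟦X⟧) * C (1 / 2) = 1 := by
    simp only [← map_ofNat C, ← map_mul]
    norm_num
  have hc : (3 : ℚ⟦X⟧) * C (2 / 9) - 1 + C (1 / 2) - C (1 / 2) * C (1 / 3) = 0 := by
    simp only [← map_ofNat C, ← map_mul, ← map_sub, ← map_add, ← map_one C]
    norm_num
  simp only [← logDerivation_apply, Derivation.leibniz, map_sub, map_add, smul_eq_mul]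
  simp only [logDerivation_apply, logD_C, hDLinv, hDv, hDu]
  linear_combination L⁻¹ ^ 2 * v * hc + L⁻¹ ^ 2 * v ^ 2 * h2
    + L⁻¹ ^ 2 * ((1 - C (1 / 2)) * v - u - C (2 / 9)) * hv
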